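/- arXiv:2304.06185 — 2 statements merged into one kernel-verified Lean document; each statement's English description precedes it below -/
import Mathlib

section
/- Let S be a nonempty finite type, t > 0, γ ∈ ℝ, let P : ℝ → Matrix S S ℝ be continuous on [0, t], and let Y : ℝ → Matrix S S ℝ be continuous on [0, t] and satisfy, for every s ∈ [0, t], Y s = Real.exp(-γ*(t - s)) • 1 + ∫ v in s..t, (γ * Real.exp(-γ*(v - s))) • (P v * Y v) dv. Then the function Z defined by Z s := Real.exp(γ*(t - s)) • Y s satisfies, for every s ∈ [0, t], Z s = 1 + ∫ v in s..t, γ • (P v * Z v) dv. -/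
open Matrix intervalIntegral

attribute [local instance] Matrix.linftyOpNormedAddCommGroup Matrix.linftyOpNormedSpace

/-- Transformation step in the proof of Lemma 2.1: multiplying the solution of the
exponential-kernel renewal equation by `e^{γ(t-s)}` yields the Volterra equation
defining the product integral. -/
theorem stmt4 {S : Type*} [Fintype S] [Nonempty S] [DecidableEq S]
    (t : ℝ) (ht : 0 < t) (γ : ℝ)
    (P : ℝ → Matrix S S ℝ) (hP : ContinuousOn P (Set.Icc 0 t))
    (Y : ℝ → Matrix S S ℝ) (hYc : ContinuousOn Y (Set.Icc 0 t))
    (hY : ∀ s ∈ Set.Icc (0 : ℝ) t,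
      Y s = Real.exp (-γ * (t - s)) • (1 : Matrix S S ℝ)
        + ∫ v in s..t, (γ * Real.exp (-γ * (v - s))) • (P v * Y v)) :
    ∀ s ∈ Set.Icc (0 : ℝ) t,
      Real.exp (γ * (t - s)) • Y s
        = 1 + ∫ v in s..t, γ • (P v * (Real.exp (γ * (t - v)) • Y v)) := by
  intro s hs
  have key : ∀ v : ℝ,
      Real.exp (γ * (t - s)) • ((γ * Real.exp (-γ * (v - s))) • (P v * Y v))
        = γ • (P v * (Real.exp (γ * (t - v)) • Y v)) := by
    intro v
    rw [mul_smul_comm, smul_smul, smul_smul]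
    congr 1
    rw [show Real.exp (γ * (t - s)) * (γ * Real.exp (-γ * (v - s)))
        = γ * Real.exp (γ * (t - s) + -γ * (v - s)) by rw [Real.exp_add]; ring,
      show γ * (t - s) + -γ * (v - s) = γ * (t - v) by ring]
  calc Real.exp (γ * (t - s)) • Y s
      = Real.exp (γ * (t - s)) • (Real.exp (-γ * (t - s)) • (1 : Matrix S S ℝ)
        + ∫ v in s..t, (γ * Real.exp (-γ * (v - s))) • (P v * Y v)) := by rw [← hY s hs]
    _ = 1 + ∫ v in s..t, γ • (P v * (Real.exp (γ * (t - v)) • Y v)) := by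
        rw [smul_add, smul_smul, ← Real.exp_add,
          show γ * (t - s) + -γ * (t - s) = 0 by ring, Real.exp_zero, one_smul,
          ← intervalIntegral.integral_smul]
        congr 1
        exact intervalIntegral.integral_congr fun v _ => key v
end

section
/- Let S be a nonempty finite type, C : Matrix S S ℝ, γ > 0, set P := 1 + γ⁻¹ • C, and let 0 ≤ s ≤ t. Then Matrix.exp ((t - s) • C) = Real.exp(-γ*(t - s)) • 1 + ∫ v in s..t, (γ * Real.exp(-γ*(v - s))) • (P * Matrix.exp ((t - v) • C)) dv, where 1 is the identity matrix and the integral is a Bochner integral of matrix-valued functions. -/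
open Matrix intervalIntegral

attribute [local instance] Matrix.linftyOpNormedAddCommGroup Matrix.linftyOpNormedSpace
attribute [local instance] Matrix.linftyOpNormedRing Matrix.linftyOpNormedAlgebra

/-- Time-homogeneous renewal equation from uniformization: with `P = I + γ⁻¹ C`,
`e^{C(t-s)} = e^{-γ(t-s)} I + ∫_s^t γ e^{-γ(v-s)} P e^{C(t-v)} dv`. -/
theorem stmt15 {S : Type*} [Fintype S] [Nonempty S] [DecidableEq S]
    (C : Matrix S S ℝ) (γ : ℝ) (hγ : 0 < γ)
    (P : Matrix S S ℝ) (hP : P = 1 + γ⁻¹ • C)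
    (s t : ℝ) (hs : 0 ≤ s) (hst : s ≤ t) :
    NormedSpace.exp ((t - s) • C)
      = Real.exp (-γ * (t - s)) • (1 : Matrix S S ℝ)
        + ∫ v in s..t, (γ * Real.exp (-γ * (v - s))) • (P * NormedSpace.exp ((t - v) • C)) := by
  set g : ℝ → Matrix S S ℝ :=
    fun v => Real.exp (-γ * (v - s)) • NormedSpace.exp ((t - v) • C) with hg
  have hcomm : ∀ v : ℝ, NormedSpace.exp ((t - v) • C) * C
      = C * NormedSpace.exp ((t - v) • C) := by
    intro v
    exact ((Commute.refl C).smul_left (t - v)).exp_left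
  have hderiv : ∀ v ∈ Set.uIcc s t, HasDerivAt g
      (-((γ * Real.exp (-γ * (v - s))) • (P * NormedSpace.exp ((t - v) • C)))) v := by
    intro v _
    have h1 : HasDerivAt (fun v : ℝ => Real.exp (-γ * (v - s)))
        (-γ * Real.exp (-γ * (v - s))) v := by
      have : HasDerivAt (fun v : ℝ => -γ * (v - s)) (-γ) v := by
        simpa using ((hasDerivAt_id v).sub_const s).const_mul (-γ)
      simpa [mul_comm] using this.exp
    have h2 : HasDerivAt (fun v : ℝ => NormedSpace.exp ((t - v) • C))
        (-(NormedSpace.exp ((t - v) • C) * C)) v := by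
      have hinner : HasDerivAt (fun v : ℝ => t - v) (-1 : ℝ) v := by
        simpa using (hasDerivAt_id v).const_sub t
      have := (hasDerivAt_exp_smul_const (𝕂 := ℝ) C (t - v)).scomp v hinner
      have h3 := this
      simp only [neg_one_smul, Function.comp_def] at h3
      exact h3
    have := h1.smul h2
    refine this.congr_deriv ?_
    symm
    rw [hP]
    have hγ' : γ ≠ 0 := ne_of_gt hγ
    simp only [add_mul, one_mul, Matrix.smul_mul, smul_smul, smul_add, neg_add]
    rw [hcomm v]
    field_simp
    ring_nf
    module
  have hcont : Continuous fun v : ℝ =>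
      (γ * Real.exp (-γ * (v - s))) • (P * NormedSpace.exp ((t - v) • C)) := by
    apply Continuous.smul (f := fun v => γ * Real.exp (-γ * (v - s))) (g := fun v => P * NormedSpace.exp ((t - v) • C))
    · exact continuous_const.mul (Real.continuous_exp.comp (by continuity))
    · exact continuous_const.mul
        (NormedSpace.exp_continuous.comp ((continuous_const.sub continuous_id).smul continuous_const))
  have hint := (hcont.neg).intervalIntegrable (μ := MeasureTheory.volume) s t
  have hftc := intervalIntegral.integral_eq_sub_of_hasDerivAt hderiv hint
  rw [intervalIntegral.integral_neg] at hftc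
  have hgs : g s = NormedSpace.exp ((t - s) • C) := by
    simp only [hg, sub_self, mul_zero, Real.exp_zero, one_smul]
  have hgt : g t = Real.exp (-γ * (t - s)) • (1 : Matrix S S ℝ) := by
    simp only [hg, sub_self, zero_smul, NormedSpace.exp_zero]
  rw [hgs, hgt] at hftc
  have h2 := congrArg Neg.neg hftc
  simp only [neg_sub, neg_neg] at h2
  exact sub_eq_iff_eq_add'.mp h2.symm
end
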